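/- arXiv:0705.0762 — 3 statements merged into one kernel-verified Lean document; each statement's English description precedes it below -/
import Mathlib

section
/- The commutator subgroup of the group G equals {(0,0,k,0) : k ∈ ℤ}, i.e. the subgroup of G generated by all commutators g₁g₂g₁⁻¹g₂⁻¹ consists exactly of the elements whose first, second and fourth coordinates vanish. -/
/-- The group `G`: underlying set ℤ⁴ with multiplication
`(m₁,n₁,k₁,ℓ₁)·(m₂,n₂,k₂,ℓ₂) = (m₁+m₂, n₁+n₂, k₁+k₂+m₁ℓ₂, ℓ₁+ℓ₂)`. -/
@[ext]
structure G where
  m : ℤ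
  n : ℤ
  k : ℤ
  l : ℤ

instance : Mul G :=
  ⟨fun g₁ g₂ => ⟨g₁.m + g₂.m, g₁.n + g₂.n, g₁.k + g₂.k + g₁.m * g₂.l, g₁.l + g₂.l⟩⟩

instance : One G := ⟨⟨0, 0, 0, 0⟩⟩

instance : Inv G := ⟨fun g => ⟨-g.m, -g.n, -g.k + g.m * g.l, -g.l⟩⟩

@[simp] lemma G.mul_m (g₁ g₂ : G) : (g₁ * g₂).m = g₁.m + g₂.m := rfl
@[simp] lemma G.mul_n (g₁ g₂ : G) : (g₁ * g₂).n = g₁.n + g₂.n := rfl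
@[simp] lemma G.mul_k (g₁ g₂ : G) : (g₁ * g₂).k = g₁.k + g₂.k + g₁.m * g₂.l := rfl
@[simp] lemma G.mul_l (g₁ g₂ : G) : (g₁ * g₂).l = g₁.l + g₂.l := rfl
@[simp] lemma G.one_m : (1 : G).m = 0 := rfl
@[simp] lemma G.one_n : (1 : G).n = 0 := rfl
@[simp] lemma G.one_k : (1 : G).k = 0 := rfl
@[simp] lemma G.one_l : (1 : G).l = 0 := rfl
@[simp] lemma G.inv_m (g : G) : g⁻¹.m = -g.m := rfl
@[simp] lemma G.inv_n (g : G) : g⁻¹.n = -g.n := rfl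
@[simp] lemma G.inv_k (g : G) : g⁻¹.k = -g.k + g.m * g.l := rfl
@[simp] lemma G.inv_l (g : G) : g⁻¹.l = -g.l := rfl

instance : Group G where
  mul_assoc a b c := by ext <;> simp <;> ring
  one_mul a := by ext <;> simp
  mul_one a := by ext <;> simp
  inv_mul_cancel a := by ext <;> simp

/-! Forgetting the coordinate `k` is a homomorphism onto the abelian group `ℤ³`, so the
commutator subgroup lies in its kernel `{(0,0,k,0)}`. Conversely, every element of that kernel is
a single commutator: `⁅(1,0,0,0), (0,0,0,k)⁆ = (0,0,k,0)`. -/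

namespace G

open scoped commutatorElement

def toMNL : G →* Multiplicative (ℤ × ℤ × ℤ) where
  toFun g := Multiplicative.ofAdd (g.m, g.n, g.l)
  map_one' := rfl
  map_mul' _ _ := rfl

lemma mem_ker_toMNL {g : G} : g ∈ toMNL.ker ↔ g.m = 0 ∧ g.n = 0 ∧ g.l = 0 := by
  simp [toMNL, MonoidHom.mem_ker, ← ofAdd_zero, Prod.ext_iff]

lemma commutatorElement_eq (g h : G) : ⁅g, h⁆ = ⟨0, 0, g.m * h.l - h.m * g.l, 0⟩ := by
  ext <;> simp [commutatorElement_def]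
  ring

lemma commutator_eq_ker_toMNL : commutator G = toMNL.ker := by
  refine le_antisymm (Abelianization.commutator_subset_ker _) fun g hg => ?_
  obtain ⟨hm, hn, hl⟩ := mem_ker_toMNL.mp hg
  have hg_eq : g = ⁅(⟨1, 0, 0, 0⟩ : G), ⟨0, 0, 0, g.k⟩⁆ := by
    rw [commutatorElement_eq]
    ext <;> simp [hm, hn, hl]
  rw [hg_eq]
  exact Subgroup.commutator_mem_commutator (Subgroup.mem_top _) (Subgroup.mem_top _)

end G

/-- The commutator subgroup of `G` is `{(0,0,k,0) : k ∈ ℤ}`. -/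
theorem stmt3 :
    (commutator G : Set G) = {g : G | g.m = 0 ∧ g.n = 0 ∧ g.l = 0} := by
  ext g
  exact G.commutator_eq_ker_toMNL ▸ G.mem_ker_toMNL
end

section
/- Let β ∈ ℝ with β ∉ ℤ, and let φ_β(s,t,x,y) = (s, t, x+β, y). Let L̃ = {(s,t,x,y) ∈ ℝ⁴ : s ∈ ℤ and x − sy ∈ ℤ} (the full preimage in ℝ⁴ of the Lagrangian torus {s = 0, x = 0} of the Kodaira–Thurston manifold). Then ρ_{mnkℓ}(L̃) = L̃ for every (m,n,k,ℓ) ∈ ℤ⁴, and φ_β(L̃) ∩ L̃ = ∅; i.e. φ_β disjoins this Lagrangian torus from itself. -/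
/-- The deck transformation `ρ_{mnkℓ}(s,t,x,y) = (s+m, t+n, x+k+my, y+ℓ)` of ℝ⁴. -/
def ρ (m n k ℓ : ℤ) (p : Fin 4 → ℝ) : Fin 4 → ℝ :=
  ![p 0 + (m : ℝ), p 1 + (n : ℝ), p 2 + (k : ℝ) + (m : ℝ) * p 3, p 3 + (ℓ : ℝ)]

/-- The map `φ_β(s,t,x,y) = (s, t, x+β, y)`. -/
def φ (β : ℝ) (p : Fin 4 → ℝ) : Fin 4 → ℝ :=
  ![p 0, p 1, p 2 + β, p 3]

/-- The full preimage in ℝ⁴ of the Lagrangian torus `{s = 0, x = 0}` of the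
Kodaira–Thurston manifold: `L̃ = {(s,t,x,y) : s ∈ ℤ, x − sy ∈ ℤ}`. -/
def Ltilde : Set (Fin 4 → ℝ) :=
  {p | (∃ i : ℤ, p 0 = (i : ℝ)) ∧ (∃ j : ℤ, p 2 - p 0 * p 3 = (j : ℝ))}

/-!
When `s ∈ ℤ`, the deck transformation `ρ_{mnkℓ}` changes `x − sy` by the integer
`k − (s + m)ℓ`, so it maps `L̃` into itself, and `ρ_{-m,-n,mℓ-k,-ℓ}` is a right inverse of it.
The map `φ_β` fixes `s` and `y` and changes `x − sy` by `β`, which is not an integer.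
-/

lemma ρ_mapsTo_Ltilde (m n k ℓ : ℤ) : Set.MapsTo (ρ m n k ℓ) Ltilde Ltilde := by
  rintro p ⟨⟨i, hi⟩, ⟨j, hj⟩⟩
  refine ⟨⟨i + m, by simp [ρ, hi]⟩, ⟨j + k - (i + m) * ℓ, ?_⟩⟩
  simp only [ρ, Matrix.cons_val]
  push_cast
  rw [← hj, hi]
  ring

lemma ρ_ρ_inv (m n k ℓ : ℤ) (p : Fin 4 → ℝ) :
    ρ m n k ℓ (ρ (-m) (-n) (m * ℓ - k) (-ℓ) p) = p := by
  ext a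
  fin_cases a <;> simp only [ρ, Matrix.cons_val] <;> push_cast <;> ring

theorem ρ_image_Ltilde (m n k ℓ : ℤ) : ρ m n k ℓ '' Ltilde = Ltilde :=
  Set.SurjOn.image_eq_of_mapsTo
    (Set.RightInvOn.surjOn (fun p _ ↦ ρ_ρ_inv m n k ℓ p) (ρ_mapsTo_Ltilde _ _ _ _))
    (ρ_mapsTo_Ltilde m n k ℓ)

lemma mem_range_intCast_of_φ_mem_Ltilde {β : ℝ} {p : Fin 4 → ℝ} (hp : p ∈ Ltilde)
    (hφp : φ β p ∈ Ltilde) : β ∈ Set.range ((↑) : ℤ → ℝ) := by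
  obtain ⟨-, j, hj⟩ := hp
  obtain ⟨-, j', hj'⟩ := hφp
  refine ⟨j' - j, ?_⟩
  simp only [φ, Matrix.cons_val] at hj'
  push_cast
  linarith

/-- If `β ∉ ℤ` then `φ_β` disjoins the Lagrangian torus `{s = 0, x = 0}` from itself:
`L̃` is invariant under every deck transformation and `φ_β(L̃) ∩ L̃ = ∅`. -/
theorem stmt8 (β : ℝ) (hβ : β ∉ Set.range ((↑) : ℤ → ℝ)) :
    (∀ m n k ℓ : ℤ, ρ m n k ℓ '' Ltilde = Ltilde) ∧
    (φ β '' Ltilde) ∩ Ltilde = ∅ := by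
  refine ⟨ρ_image_Ltilde, Set.eq_empty_of_forall_notMem ?_⟩
  rintro _ ⟨⟨p, hp, rfl⟩, hφp⟩
  exact hβ (mem_range_intCast_of_φ_mem_Ltilde hp hφp)
end

section
/- Let a,b,e,f ∈ ℝ with be − af ≠ 0. Define the vector field X on ℝ⁴ by X(s,t,x,y) = (1/(be−af))·(b, 0, −a s, −a), i.e. X = (1/(be−af))(b ∂/∂s − as ∂/∂x − a ∂/∂y). Then: (i) ι(X)ω_{abef} = dt, i.e. for every p = (s,t,x,y) ∈ ℝ⁴ and every v ∈ ℝ⁴, ω_{abef}(p)(X(p), v) = v₂; and (ii) X is invariant under the deck transformations: for every (m,n,k,ℓ) ∈ ℤ⁴, X(ρ_{mnkℓ}(p)) = L(X(p)), where L(u₁,u₂,u₃,u₄) = (u₁,u₂,u₃+mu₄,u₄) is the derivative of ρ_{mnkℓ}. (Hence X is a well-defined symplectic vector field on the Kodaira–Thurston manifold with flux class dt.) -/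
/-- The 2-form `ω_{abef} = a γ∧ds + b γ∧dy + e ds∧dt + f dy∧dt` on ℝ⁴, where
`γ = dx − s dy`, evaluated at the point `p = (s,t,x,y)` on vectors `u, v`. -/
def ωKT (a b e f : ℝ) (p u v : Fin 4 → ℝ) : ℝ :=
  a * ((u 2 - p 0 * u 3) * v 0 - (v 2 - p 0 * v 3) * u 0)
    + b * ((u 2 - p 0 * u 3) * v 3 - (v 2 - p 0 * v 3) * u 3)
    + e * (u 0 * v 1 - u 1 * v 0)
    + f * (u 3 * v 1 - u 1 * v 3)

/-- The vector field `X = (1/(be−af))(b ∂/∂s − as ∂/∂x − a ∂/∂y)` on ℝ⁴. -/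
noncomputable def X (a b e f : ℝ) (p : Fin 4 → ℝ) : Fin 4 → ℝ :=
  (1 / (b * e - a * f)) • ![b, 0, -a * p 0, -a]

theorem ωKT_eq_of_mem_ker_contact {a b e f : ℝ} {p u : Fin 4 → ℝ}
    (hu : u 2 - p 0 * u 3 = 0) (v : Fin 4 → ℝ) :
    ωKT a b e f p u v =
      (e * u 0 + f * u 3) * v 1 - (a * u 0 + b * u 3) * (v 2 - p 0 * v 3)
        - u 1 * (e * v 0 + f * v 3) := by
  unfold ωKT
  rw [hu]
  ring

section X

variable (a b e f : ℝ) (p : Fin 4 → ℝ)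

@[simp] theorem X_apply_zero : X a b e f p 0 = b / (b * e - a * f) := by
  simp [X, div_eq_inv_mul]

@[simp] theorem X_apply_one : X a b e f p 1 = 0 := by
  simp [X]

@[simp] theorem X_apply_two : X a b e f p 2 = -a * p 0 / (b * e - a * f) := by
  simp [X, div_eq_inv_mul]

@[simp] theorem X_apply_three : X a b e f p 3 = -a / (b * e - a * f) := by
  simp [X, div_eq_inv_mul]

theorem X_mem_ker_contact : X a b e f p 2 - p 0 * X a b e f p 3 = 0 := by
  simp only [X_apply_two, X_apply_three]
  ring

theorem contact_coeff_X : a * X a b e f p 0 + b * X a b e f p 3 = 0 := by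
  simp only [X_apply_zero, X_apply_three]
  ring

theorem dt_coeff_X (h : b * e - a * f ≠ 0) : e * X a b e f p 0 + f * X a b e f p 3 = 1 := by
  simp only [X_apply_zero, X_apply_three]
  rw [← div_self h]
  ring

theorem ωKT_X_left (h : b * e - a * f ≠ 0) (v : Fin 4 → ℝ) :
    ωKT a b e f p (X a b e f p) v = v 1 := by
  rw [ωKT_eq_of_mem_ker_contact (X_mem_ker_contact a b e f p), contact_coeff_X,
    dt_coeff_X a b e f p h, X_apply_one]
  ring

theorem X_ρ (m n k ℓ : ℤ) :
    X a b e f (ρ m n k ℓ p) =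
      ![X a b e f p 0, X a b e f p 1, X a b e f p 2 + (m : ℝ) * X a b e f p 3, X a b e f p 3] := by
  ext i
  fin_cases i <;> simp [ρ]
  ring

end X

/-- If `be − af ≠ 0` then `ι(X)ω_{abef} = dt`, and `X` is invariant under the deck
transformations (`L` being the derivative of `ρ_{mnkℓ}`), hence `X` is a well-defined
symplectic vector field on the Kodaira–Thurston manifold with flux class `dt`. -/
theorem stmt19 (a b e f : ℝ) (h : b * e - a * f ≠ 0) :
    (∀ p v : Fin 4 → ℝ, ωKT a b e f p (X a b e f p) v = v 1) ∧
    (∀ (m n k ℓ : ℤ) (p : Fin 4 → ℝ),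
      X a b e f (ρ m n k ℓ p) =
        ![X a b e f p 0, X a b e f p 1,
          X a b e f p 2 + (m : ℝ) * X a b e f p 3, X a b e f p 3]) :=
  ⟨fun p => ωKT_X_left a b e f p h, fun m n k ℓ p => X_ρ a b e f p m n k ℓ⟩
end
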